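/- arXiv:2506.12693 — 6 statements merged into one kernel-verified Lean document; each statement's English description precedes it below -/
import Mathlib

section
/- Let n and R be positive integers, σ_z > 0, δ ≥ 0, and η ∈ (0,1). Let C ⊂ ℝ^n be a finite codebook with |C| ≤ 2^R, and let x ∈ ℝ^n be such that some c* ∈ C satisfies (1/n)‖x − c*‖₂² ≤ δ. Let z ∈ ℝ^n be a random vector whose coordinates are independent Gaussian random variables with mean 0 and variance σ_z², let y = x + z, and let x̂ be any element of argmin_{c ∈ C} ‖y − c‖₂². Then with probability at least 1 − 2^{−ηR+2}, one has (1/√n)‖x − x̂‖₂ ≤ √δ + 2 σ_z √((2 ln 2) R / n) · (1 + 2√η). -/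
open MeasureTheory ProbabilityTheory Real
open scoped NNReal ENNReal RealInnerProductSpace

/-!
Let `c₀ ∈ C` be the codeword within distortion `δ` of `x`. Since `x̂` is at least as close to
`y = x + z` as `c₀`, expanding both squares gives `‖x - x̂‖² ≤ ‖x - c₀‖² + 2⟪x̂ - c₀, z⟫`. On the
event that `⟪c - c₀, z⟫ ≤ σ t ‖c - c₀‖` for every codeword `c`, this forces
`‖x - x̂‖ ≤ ‖x - c₀‖ + 2σt`. Each `⟪c - c₀, z⟫` is Gaussian with variance `σ²‖c - c₀‖²`, so by the
Chernoff bound and a union bound the event fails with probability at most `|C| e^{-t²/2}`, which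
is `2^{-ηR}` for `t² = 2 ln 2 (1 + η) R`. Finally `√(1 + η) ≤ 1 + 2√η`.
-/

lemma hasSubgaussianMGF_of_map_eq_gaussianReal {Ω : Type*} [MeasurableSpace Ω] {μ : Measure Ω}
    {X : Ω → ℝ} {v : ℝ≥0} (hX : μ.map X = gaussianReal 0 v) : HasSubgaussianMGF X v μ := by
  have hXm : AEMeasurable X μ := aemeasurable_of_map_neZero (by rw [hX]; infer_instance)
  rw [← HasSubgaussianMGF.id_map_iff hXm, hX]
  exact ⟨integrable_exp_mul_gaussianReal, fun t ↦ by simp [mgf_id_gaussianReal]⟩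

lemma EuclideanSpace.real_inner_eq_sum {ι : Type*} [Fintype ι] (w x : EuclideanSpace ℝ ι) :
    ⟪w, x⟫ = ∑ i, w i * x i := by
  simp [PiLp.inner_apply, mul_comm]

lemma hasSubgaussianMGF_inner {ι Ω : Type*} [Fintype ι] [MeasurableSpace Ω] {μ : Measure Ω}
    {v : ℝ≥0} {z : Ω → EuclideanSpace ℝ ι}
    (hlaw : ∀ i, μ.map (fun ω ↦ z ω i) = gaussianReal 0 v)
    (hindep : iIndepFun (fun i ω ↦ z ω i) μ) (w : EuclideanSpace ℝ ι) :
    HasSubgaussianMGF (fun ω ↦ ⟪w, z ω⟫) (‖w‖₊ ^ 2 * v) μ := by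
  have hsum := HasSubgaussianMGF.sum_of_iIndepFun (s := Finset.univ)
    (hindep.comp (fun i x ↦ w i * x) fun i ↦ measurable_const_mul (w i))
    fun i _ ↦ (hasSubgaussianMGF_of_map_eq_gaussianReal (hlaw i)).const_mul (w i)
  convert hsum using 1
  · simp [EuclideanSpace.real_inner_eq_sum]
  · ext
    push_cast [EuclideanSpace.real_norm_sq_eq, Finset.sum_mul]
    rfl

lemma measure_mul_norm_lt_inner_le {ι Ω : Type*} [Fintype ι] [MeasurableSpace Ω]
    {μ : Measure Ω} [IsFiniteMeasure μ] {σ : ℝ} (hσ : 0 < σ) {z : Ω → EuclideanSpace ℝ ι}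
    (hlaw : ∀ i, μ.map (fun ω ↦ z ω i) = gaussianReal 0 (σ ^ 2).toNNReal)
    (hindep : iIndepFun (fun i ω ↦ z ω i) μ) (w : EuclideanSpace ℝ ι) {t : ℝ} (ht : 0 ≤ t) :
    μ {ω | σ * t * ‖w‖ < ⟪w, z ω⟫} ≤ ENNReal.ofReal (exp (-t ^ 2 / 2)) := by
  rcases eq_or_ne w 0 with rfl | hw
  · simp
  have hchernoff := (hasSubgaussianMGF_inner hlaw hindep w).measure_ge_le
    (ε := σ * t * ‖w‖) (by positivity)
  have hexponent : -(σ * t * ‖w‖) ^ 2 / (2 * ((‖w‖₊ ^ 2 * (σ ^ 2).toNNReal : ℝ≥0) : ℝ))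
      = -t ^ 2 / 2 := by
    have : ‖w‖ ≠ 0 := norm_ne_zero_iff.mpr hw
    push_cast [Real.coe_toNNReal _ (sq_nonneg σ)]
    field_simp
  rw [hexponent] at hchernoff
  calc μ {ω | σ * t * ‖w‖ < ⟪w, z ω⟫}
      ≤ μ {ω | σ * t * ‖w‖ ≤ ⟪w, z ω⟫} :=
        measure_mono (Set.ofPred_subset_ofPred.mpr fun _ ↦ le_of_lt)
    _ = ENNReal.ofReal (μ.real {ω | σ * t * ‖w‖ ≤ ⟪w, z ω⟫}) := (ofReal_measureReal).symm
    _ ≤ ENNReal.ofReal (exp (-t ^ 2 / 2)) := ENNReal.ofReal_le_ofReal hchernoff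

lemma measure_exists_mul_norm_sub_lt_inner_le {ι Ω : Type*} [Fintype ι] [MeasurableSpace Ω]
    {μ : Measure Ω} [IsFiniteMeasure μ] {σ : ℝ} (hσ : 0 < σ) {z : Ω → EuclideanSpace ℝ ι}
    (hlaw : ∀ i, μ.map (fun ω ↦ z ω i) = gaussianReal 0 (σ ^ 2).toNNReal)
    (hindep : iIndepFun (fun i ω ↦ z ω i) μ) (C : Finset (EuclideanSpace ℝ ι))
    (c₀ : EuclideanSpace ℝ ι) {t : ℝ} (ht : 0 ≤ t) :
    μ {ω | ∃ c ∈ C, σ * t * ‖c - c₀‖ < ⟪c - c₀, z ω⟫}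
      ≤ C.card * ENNReal.ofReal (exp (-t ^ 2 / 2)) := by
  have hunion : {ω | ∃ c ∈ C, σ * t * ‖c - c₀‖ < ⟪c - c₀, z ω⟫}
      = ⋃ c ∈ C, {ω | σ * t * ‖c - c₀‖ < ⟪c - c₀, z ω⟫} := by
    ext; simp
  calc μ {ω | ∃ c ∈ C, σ * t * ‖c - c₀‖ < ⟪c - c₀, z ω⟫}
      ≤ ∑ c ∈ C, μ {ω | σ * t * ‖c - c₀‖ < ⟪c - c₀, z ω⟫} :=
        hunion ▸ measure_biUnion_finset_le C _
    _ ≤ ∑ _c ∈ C, ENNReal.ofReal (exp (-t ^ 2 / 2)) :=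
        Finset.sum_le_sum fun c _ ↦ measure_mul_norm_lt_inner_le hσ hlaw hindep (c - c₀) ht
    _ = C.card * ENNReal.ofReal (exp (-t ^ 2 / 2)) := by rw [Finset.sum_const, nsmul_eq_mul]

lemma norm_sub_le_of_norm_add_sub_le {E : Type*} [NormedAddCommGroup E] [InnerProductSpace ℝ E]
    {x z c c₀ : E} {a : ℝ} (ha : 0 ≤ a) (hle : ‖x + z - c‖ ≤ ‖x + z - c₀‖)
    (hinner : ⟪c - c₀, z⟫ ≤ a * ‖c - c₀‖) : ‖x - c‖ ≤ ‖x - c₀‖ + 2 * a := by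
  have hsq : ‖(x - c) + z‖ ^ 2 ≤ ‖(x - c₀) + z‖ ^ 2 := by
    rw [sub_add_eq_add_sub, sub_add_eq_add_sub]
    gcongr
  rw [norm_add_sq_real, norm_add_sq_real] at hsq
  have hinner_sub : ⟪x - c₀, z⟫ - ⟪x - c, z⟫ = ⟪c - c₀, z⟫ := by
    rw [← inner_sub_left, sub_sub_sub_cancel_left]
  have htriangle : ‖c - c₀‖ ≤ ‖x - c‖ + ‖x - c₀‖ := by
    simpa only [dist_eq_norm] using dist_triangle_left c c₀ x
  nlinarith [norm_nonneg (x - c), norm_nonneg (x - c₀),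
    mul_le_mul_of_nonneg_left htriangle ha]

lemma sqrt_one_add_le_one_add_two_mul_sqrt {η : ℝ} (hη : 0 ≤ η) : √(1 + η) ≤ 1 + 2 * √η := by
  rw [Real.sqrt_le_left (by positivity)]
  nlinarith [Real.sq_sqrt hη, Real.sqrt_nonneg η]

lemma ofReal_one_sub_le_measure {α : Type*} [MeasurableSpace α] {μ : Measure α}
    [IsProbabilityMeasure μ] {s : Set α} {a : ℝ} (ha : 0 ≤ a) (h : μ sᶜ ≤ ENNReal.ofReal a) :
    ENNReal.ofReal (1 - a) ≤ μ s := by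
  rw [ENNReal.ofReal_sub _ ha, ENNReal.ofReal_one, tsub_le_iff_right]
  calc 1 = μ Set.univ := measure_univ.symm
    _ ≤ μ s + μ sᶜ := measure_univ_le_add_compl s
    _ ≤ μ s + ENNReal.ofReal a := by gcongr

lemma exp_neg_sq_sqrt_two_mul_log_two_div_two {a : ℝ} (ha : 0 ≤ a) :
    exp (-√(2 * log 2 * a) ^ 2 / 2) = (2 : ℝ) ^ (-a) := by
  rw [Real.sq_sqrt (by positivity), Real.rpow_def_of_pos two_pos]
  ring_nf

lemma measure_exists_mul_norm_sub_lt_inner_le_two_rpow {ι Ω : Type*} [Fintype ι]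
    [MeasurableSpace Ω] {μ : Measure Ω} [IsFiniteMeasure μ] {σ : ℝ} (hσ : 0 < σ)
    {z : Ω → EuclideanSpace ℝ ι}
    (hlaw : ∀ i, μ.map (fun ω ↦ z ω i) = gaussianReal 0 (σ ^ 2).toNNReal)
    (hindep : iIndepFun (fun i ω ↦ z ω i) μ) {R : ℕ} (C : Finset (EuclideanSpace ℝ ι))
    (hC : (C.card : ℝ) ≤ 2 ^ R) (c₀ : EuclideanSpace ℝ ι) {η : ℝ} (hη : 0 ≤ η) :
    μ {ω | ∃ c ∈ C, σ * √(2 * log 2 * R * (1 + η)) * ‖c - c₀‖ < ⟪c - c₀, z ω⟫}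
      ≤ ENNReal.ofReal (2 ^ (-(η * R))) := by
  calc _ ≤ C.card * ENNReal.ofReal (exp (-√(2 * log 2 * (R * (1 + η))) ^ 2 / 2)) := by
        simpa only [mul_assoc] using
          measure_exists_mul_norm_sub_lt_inner_le hσ hlaw hindep C c₀ (Real.sqrt_nonneg _)
    _ = ENNReal.ofReal (C.card * (2 : ℝ) ^ (-(R * (1 + η)))) := by
        rw [exp_neg_sq_sqrt_two_mul_log_two_div_two (by positivity),
          ENNReal.ofReal_mul (Nat.cast_nonneg _), ENNReal.ofReal_natCast]
    _ ≤ ENNReal.ofReal ((2 : ℝ) ^ (R : ℝ) * 2 ^ (-(R * (1 + η)))) := by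
        rw [Real.rpow_natCast]
        gcongr
    _ = ENNReal.ofReal (2 ^ (-(η * R))) := by
        rw [← Real.rpow_add two_pos]
        ring_nf

lemma one_div_sqrt_mul_add_le {n d δ σ L η : ℝ} (hn : 0 < n) (hd : 1 / n * d ^ 2 ≤ δ)
    (hσ : 0 ≤ σ) (hη : 0 ≤ η) :
    1 / √n * (d + 2 * (σ * √(L * (1 + η)))) ≤ √δ + 2 * σ * √(L / n) * (1 + 2 * √η) := by
  have hd' : 1 / √n * d ≤ √δ := by
    refine (le_abs_self _).trans (Real.abs_le_sqrt ?_)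
    rwa [mul_pow, div_pow, Real.sq_sqrt hn.le, one_pow]
  have hL : 1 / √n * √(L * (1 + η)) = √(L / n) * √(1 + η) := by
    rw [← Real.sqrt_mul' _ (by positivity), one_div_mul_eq_div, ← Real.sqrt_div' _ hn.le]
    ring_nf
  calc 1 / √n * (d + 2 * (σ * √(L * (1 + η))))
      = 1 / √n * d + 2 * σ * (1 / √n * √(L * (1 + η))) := by ring
    _ = 1 / √n * d + 2 * σ * (√(L / n) * √(1 + η)) := by rw [hL]
    _ ≤ √δ + 2 * σ * (√(L / n) * (1 + 2 * √η)) := by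
        gcongr
        exact sqrt_one_add_le_one_add_two_mul_sqrt hη
    _ = √δ + 2 * σ * √(L / n) * (1 + 2 * √η) := by ring

theorem stmt0_general
    (n R : ℕ) (hn : 0 < n)
    (σz : ℝ) (hσ : 0 < σz) (δ : ℝ)
    (η : ℝ) (hη0 : 0 < η)
    (C : Finset (EuclideanSpace ℝ (Fin n)))
    (hCcard : (C.card : ℝ) ≤ 2 ^ R)
    (x : EuclideanSpace ℝ (Fin n))
    (hdist : ∃ c ∈ C, (1 / n : ℝ) * ‖x - c‖ ^ 2 ≤ δ)
    {Ω : Type*} [MeasurableSpace Ω] (P : Measure Ω) [IsProbabilityMeasure P]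
    (z : Ω → EuclideanSpace ℝ (Fin n))
    (hzlaw : ∀ i, P.map (fun ω => z ω i) = gaussianReal 0 (Real.toNNReal (σz ^ 2)))
    (hzindep : iIndepFun (fun i ω => z ω i) P)
    (xhat : Ω → EuclideanSpace ℝ (Fin n))
    (hxhat_mem : ∀ ω, xhat ω ∈ C)
    (hxhat_min : ∀ ω, ∀ c ∈ C, ‖(x + z ω) - xhat ω‖ ≤ ‖(x + z ω) - c‖) :
    ENNReal.ofReal (1 - (2 : ℝ) ^ (-(η * R) + 2)) ≤
      P {ω | (1 / Real.sqrt n) * ‖x - xhat ω‖ ≤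
        Real.sqrt δ + 2 * σz * Real.sqrt (2 * Real.log 2 * R / n) * (1 + 2 * Real.sqrt η)} := by
  obtain ⟨c₀, hc₀, hδc₀⟩ := hdist
  set t := √(2 * log 2 * R * (1 + η))
  have hbad :=
    measure_exists_mul_norm_sub_lt_inner_le_two_rpow hσ hzlaw hzindep C hCcard c₀ hη0.le
  refine (ENNReal.ofReal_le_ofReal ?_).trans (ofReal_one_sub_le_measure (by positivity)
    ((measure_mono (Set.compl_subset_comm.mp fun ω hω ↦ ?_)).trans hbad))
  · gcongr 1 - ?_
    exact Real.rpow_le_rpow_of_exponent_le one_le_two (by linarith)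
  simp only [Set.mem_compl_iff, Set.mem_ofPred_eq, not_exists, not_and, not_lt] at hω
  have hclose := norm_sub_le_of_norm_add_sub_le (by positivity) (hxhat_min ω c₀ hc₀)
    (hω (xhat ω) (hxhat_mem ω))
  calc 1 / √n * ‖x - xhat ω‖ ≤ 1 / √n * (‖x - c₀‖ + 2 * (σz * t)) := by gcongr
    _ ≤ _ := one_div_sqrt_mul_add_le (Nat.cast_pos.mpr hn) hδc₀ hσ.le hη0.le

/-- Compression-based ML denoising under AWGN: high-probability error bound
in terms of the rate `R` and distortion `δ` of the codebook. -/
theorem stmt0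
    (n R : ℕ) (hn : 0 < n) (hR : 0 < R)
    (σz : ℝ) (hσ : 0 < σz) (δ : ℝ) (hδ : 0 ≤ δ)
    (η : ℝ) (hη0 : 0 < η) (hη1 : η < 1)
    (C : Finset (EuclideanSpace ℝ (Fin n)))
    (hCcard : (C.card : ℝ) ≤ 2 ^ R)
    (x : EuclideanSpace ℝ (Fin n))
    (hdist : ∃ c ∈ C, (1 / n : ℝ) * ‖x - c‖ ^ 2 ≤ δ)
    {Ω : Type*} [MeasurableSpace Ω] (P : Measure Ω) [IsProbabilityMeasure P]
    (z : Ω → EuclideanSpace ℝ (Fin n))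
    (hzmeas : ∀ i, Measurable fun ω => z ω i)
    (hzlaw : ∀ i, P.map (fun ω => z ω i) = gaussianReal 0 (Real.toNNReal (σz ^ 2)))
    (hzindep : iIndepFun (fun i ω => z ω i) P)
    (xhat : Ω → EuclideanSpace ℝ (Fin n))
    (hxhat_mem : ∀ ω, xhat ω ∈ C)
    (hxhat_min : ∀ ω, ∀ c ∈ C, ‖(x + z ω) - xhat ω‖ ≤ ‖(x + z ω) - c‖) :
    ENNReal.ofReal (1 - (2 : ℝ) ^ (-(η * R) + 2)) ≤
      P {ω | (1 / Real.sqrt n) * ‖x - xhat ω‖ ≤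
        Real.sqrt δ + 2 * σz * Real.sqrt (2 * Real.log 2 * R / n) * (1 + 2 * Real.sqrt η)} :=
  stmt0_general n R hn σz hσ δ η hη0 C hCcard x hdist P z hzlaw hzindep xhat hxhat_mem hxhat_min
end

section
/- Let 0 < α_m ≤ α_M < ∞ and let α₁, α₂ ∈ [α_m, α_M]. Then the Kullback–Leibler divergence between the Poisson distributions with means α₁ and α₂, which equals α₂ − α₁ + α₁ ln(α₁/α₂), satisfies (α_m/α_M)² · (α₂ − α₁)² / (2α₁) ≤ α₂ − α₁ + α₁ ln(α₁/α₂) ≤ (α_M/α_m)² · (α₂ − α₁)² / (2α₁). -/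
/-! With `x = α₂ / α₁` the divergence is `α₁ φ(x)` for `φ(x) = x - 1 - log x`, and
`(α₂ - α₁)² / (2α₁) = α₁ (x - 1)² / 2`. The derivative of `φ(t) - c (t - 1)² / 2` is
`(t - 1)(1 - c t) / t`, so this function grows away from its zero at `t = 1` as long as `c t ≤ 1`,
and decreases away from it as long as `c t ≥ 1`. Both `1` and `x` lie in `[αm/αM, αM/αm]`, so
`c = (αm/αM)²` and `C = (αM/αm)²` satisfy these conditions between `1` and `x`. -/

open Real Set

lemma le_of_hasDerivAt_of_sub_mul_deriv_nonneg {f f' : ℝ → ℝ} {a x : ℝ}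
    (hf : ∀ t ∈ uIcc a x, HasDerivAt f (f' t) t)
    (hsign : ∀ t ∈ uIcc a x, 0 ≤ (t - a) * f' t) : f a ≤ f x := by
  have hcont : ContinuousOn f (uIcc a x) := fun t ht ↦ (hf t ht).continuousAt.continuousWithinAt
  rcases le_total a x with hax | hxa
  · rw [uIcc_of_le hax] at hf hsign hcont
    refine monotoneOn_of_hasDerivWithinAt_nonneg (convex_Icc a x) hcont
      (fun t ht ↦ (hf t (interior_subset ht)).hasDerivWithinAt) (fun t ht ↦ ?_)
      (left_mem_Icc.2 hax) (right_mem_Icc.2 hax) hax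
    rw [interior_Icc] at ht
    exact nonneg_of_mul_nonneg_right (hsign t (Ioo_subset_Icc_self ht)) (sub_pos.2 ht.1)
  · rw [uIcc_of_ge hxa] at hf hsign hcont
    refine antitoneOn_of_hasDerivWithinAt_nonpos (convex_Icc x a) hcont
      (fun t ht ↦ (hf t (interior_subset ht)).hasDerivWithinAt) (fun t ht ↦ ?_)
      (left_mem_Icc.2 hxa) (right_mem_Icc.2 hxa) hxa
    rw [interior_Icc] at ht
    exact nonpos_of_mul_nonneg_right (hsign t (Ioo_subset_Icc_self ht)) (sub_neg.2 ht.2)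

lemma hasDerivAt_sub_one_sub_log_sub_mul_sq (c : ℝ) {t : ℝ} (ht : t ≠ 0) :
    HasDerivAt (fun s ↦ s - 1 - log s - c * ((s - 1) ^ 2 / 2)) (1 - t⁻¹ - c * (t - 1)) t := by
  have hsq : HasDerivAt (fun s : ℝ ↦ (s - 1) ^ 2 / 2) (t - 1) t :=
    ((((hasDerivAt_id' t).sub_const 1).fun_pow 2).div_const 2).congr_deriv (by norm_num)
  exact (((hasDerivAt_id t).sub_const 1).sub (hasDerivAt_log ht)).sub (hsq.const_mul c)

lemma mul_sq_div_two_le_sub_one_sub_log {c x : ℝ} (hx : 0 < x) (hc : c ≤ 1) (hcx : c * x ≤ 1) :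
    c * ((x - 1) ^ 2 / 2) ≤ x - 1 - log x := by
  have hpos : ∀ t ∈ uIcc 1 x, 0 < t := fun t ht ↦ (lt_min one_pos hx).trans_le ht.1
  have hct : ∀ t ∈ uIcc 1 x, c * t ≤ 1 := fun t ht ↦ by
    rcases le_total 0 c with hc0 | hc0
    · calc c * t ≤ c * max 1 x := mul_le_mul_of_nonneg_left ht.2 hc0
        _ = max c (c * x) := by rw [mul_max_of_nonneg _ _ hc0, mul_one]
        _ ≤ 1 := max_le hc hcx
    · nlinarith [hpos t ht]
  have key := le_of_hasDerivAt_of_sub_mul_deriv_nonneg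
    (fun t ht ↦ hasDerivAt_sub_one_sub_log_sub_mul_sq c (hpos t ht).ne') fun t ht ↦ by
      have ht0 := (hpos t ht).ne'
      rw [show (t - 1) * (1 - t⁻¹ - c * (t - 1)) = (t - 1) ^ 2 * (1 - c * t) / t by
        field_simp]
      exact div_nonneg (mul_nonneg (sq_nonneg _) (sub_nonneg.2 (hct t ht))) (hpos t ht).le
  simp only [sub_self, log_one, ne_eq, OfNat.ofNat_ne_zero, not_false_eq_true, zero_pow, zero_div,
    mul_zero] at key
  linarith

lemma sub_one_sub_log_le_mul_sq_div_two {C x : ℝ} (hx : 0 < x) (hC : 1 ≤ C) (hCx : 1 ≤ C * x) :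
    x - 1 - log x ≤ C * ((x - 1) ^ 2 / 2) := by
  have hpos : ∀ t ∈ uIcc 1 x, 0 < t := fun t ht ↦ (lt_min one_pos hx).trans_le ht.1
  have hCt : ∀ t ∈ uIcc 1 x, 1 ≤ C * t := fun t ht ↦
    calc 1 ≤ min C (C * x) := le_min hC hCx
      _ = C * min 1 x := by rw [mul_min_of_nonneg _ _ (zero_le_one.trans hC), mul_one]
      _ ≤ C * t := mul_le_mul_of_nonneg_left ht.1 (zero_le_one.trans hC)
  have key := le_of_hasDerivAt_of_sub_mul_deriv_nonneg
    (fun t ht ↦ (hasDerivAt_sub_one_sub_log_sub_mul_sq C (hpos t ht).ne').fun_neg) fun t ht ↦ by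
      have ht0 := (hpos t ht).ne'
      rw [show (t - 1) * -(1 - t⁻¹ - C * (t - 1)) = (t - 1) ^ 2 * (C * t - 1) / t by
        field_simp; ring]
      exact div_nonneg (mul_nonneg (sq_nonneg _) (sub_nonneg.2 (hCt t ht))) (hpos t ht).le
  simp only [sub_self, log_one, ne_eq, OfNat.ofNat_ne_zero, not_false_eq_true, zero_pow, zero_div,
    mul_zero, neg_zero] at key
  linarith

lemma sq_div_mul_div_le_one {m M a b : ℝ} (hm : 0 < m) (ha : a ∈ Icc m M) (hb : b ∈ Icc m M) :
    (m / M) ^ 2 * (b / a) ≤ 1 := by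
  have ha0 : 0 < a := hm.trans_le ha.1
  have hb0 : 0 < b := hm.trans_le hb.1
  have hM : 0 < M := ha0.trans_le ha.2
  rw [div_pow, div_mul_div_comm, div_le_one (by positivity)]
  calc m ^ 2 * b = m * (m * b) := by ring
    _ ≤ M * (a * M) :=
      mul_le_mul (ha.1.trans ha.2) (mul_le_mul ha.1 hb.2 hb0.le ha0.le)
        (by positivity) hM.le
    _ = M ^ 2 * a := by ring

lemma one_le_sq_div_mul_div {m M a b : ℝ} (hm : 0 < m) (ha : a ∈ Icc m M) (hb : b ∈ Icc m M) :
    1 ≤ (M / m) ^ 2 * (b / a) := by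
  have ha0 : 0 < a := hm.trans_le ha.1
  have hb0 : 0 < b := hm.trans_le hb.1
  have hM : 0 < M := ha0.trans_le ha.2
  rw [show (M / m) ^ 2 * (b / a) = ((m / M) ^ 2 * (a / b))⁻¹ by field_simp]
  exact (one_le_inv₀ (by positivity)).2 (sq_div_mul_div_le_one hm hb ha)

theorem stmt4_general (αm αM α1 α2 : ℝ) (hm : 0 < αm)
    (h1 : α1 ∈ Set.Icc αm αM) (h2 : α2 ∈ Set.Icc αm αM) :
    (αm / αM) ^ 2 * ((α2 - α1) ^ 2 / (2 * α1)) ≤ α2 - α1 + α1 * Real.log (α1 / α2) ∧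
      α2 - α1 + α1 * Real.log (α1 / α2) ≤ (αM / αm) ^ 2 * ((α2 - α1) ^ 2 / (2 * α1)) := by
  have hα1 : 0 < α1 := hm.trans_le h1.1
  have hα2 : 0 < α2 := hm.trans_le h2.1
  have hmM : αm ≤ αM := h1.1.trans h1.2
  have hx : 0 < α2 / α1 := div_pos hα2 hα1
  have hKL : α2 - α1 + α1 * log (α1 / α2) = α1 * (α2 / α1 - 1 - log (α2 / α1)) := by
    rw [log_div hα1.ne' hα2.ne', log_div hα2.ne' hα1.ne']
    field_simp
    ring
  have hsq : (α2 - α1) ^ 2 / (2 * α1) = α1 * ((α2 / α1 - 1) ^ 2 / 2) := by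
    field_simp
  rw [hKL, hsq, mul_left_comm, mul_left_comm ((αM / αm) ^ 2)]
  constructor
  · refine mul_le_mul_of_nonneg_left (mul_sq_div_two_le_sub_one_sub_log hx ?_
      (sq_div_mul_div_le_one hm h1 h2)) hα1.le
    have hM : 0 ≤ αM := hm.le.trans hmM
    exact pow_le_one₀ (div_nonneg hm.le hM) (div_le_one_of_le₀ hmM hM)
  · exact mul_le_mul_of_nonneg_left (sub_one_sub_log_le_mul_sq_div_two hx
      (one_le_pow₀ ((one_le_div hm).2 hmM)) (one_le_sq_div_mul_div hm h1 h2)) hα1.le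

/-- Two-sided quadratic bounds on the KL divergence between Poisson distributions,
`D_KL(Poisson(α₁) ‖ Poisson(α₂)) = α₂ − α₁ + α₁ ln(α₁/α₂)`. -/
theorem stmt4 (αm αM α1 α2 : ℝ) (hm : 0 < αm) (hmM : αm ≤ αM)
    (h1 : α1 ∈ Set.Icc αm αM) (h2 : α2 ∈ Set.Icc αm αM) :
    (αm / αM) ^ 2 * ((α2 - α1) ^ 2 / (2 * α1)) ≤ α2 - α1 + α1 * Real.log (α1 / α2) ∧
      α2 - α1 + α1 * Real.log (α1 / α2) ≤ (αM / αm) ^ 2 * ((α2 - α1) ^ 2 / (2 * α1)) :=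
  stmt4_general αm αM α1 α2 hm h1 h2
end

section
/- Let Y₁, …, Y_n be independent random variables with Y_i ∼ Poisson(α_i) for α_i > 0, and let w₁, …, w_n ∈ ℝ be not all zero. Set σ_n² = Σ_{i=1}^n w_i² α_i and w_M = max_{1 ≤ i ≤ n} |w_i|. Then for every t with 0 ≤ t ≤ 3σ_n²/(2 w_M), one has P( Σ_{i=1}^n w_i Y_i ≥ Σ_{i=1}^n w_i α_i + t ) ≤ exp( − t² / (2(σ_n² + w_M t / 3)) ). -/
/-!
Chernoff's bound reduces the tail to the moment generating function, which factorises by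
independence; a Poisson variable with mean `α` has `𝔼 exp (x Y) = exp (α (eˣ - 1))`.
Bernstein's inequality `eˣ - 1 - x ≤ x² / (2 (1 - c))` for `x ≤ 3c`, `0 ≤ c < 1`, bounds
each factor by a Gaussian-type term, and the Chernoff parameter `s = t / (σ² + w_M t / 3)`
gives the stated exponent.
-/

open MeasureTheory ProbabilityTheory

open Real NNReal Finset Nat

namespace Real

theorem exp_le_one_add_add_sq_div_two_of_nonpos {x : ℝ} (hx : x ≤ 0) :
    exp x ≤ 1 + x + x ^ 2 / 2 := by
  -- with `y = -x`: `(1 - y + y²/2)(1 + y + y²/2) = 1 + y⁴/4 ≥ 1`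
  have hquad := quadratic_le_exp_of_nonneg (neg_nonneg.2 hx)
  have hpos : 0 < 1 + x + x ^ 2 / 2 := by nlinarith
  have hprod : 1 ≤ (1 + x + x ^ 2 / 2) * exp (-x) := by nlinarith [sq_nonneg (x ^ 2)]
  calc exp x ≤ exp x * ((1 + x + x ^ 2 / 2) * exp (-x)) :=
        le_mul_of_one_le_right (exp_pos x).le hprod
    _ = 1 + x + x ^ 2 / 2 := by rw [mul_left_comm, ← exp_add, add_neg_cancel, exp_zero, mul_one]

theorem hasSum_exp_sub_one_sub (x : ℝ) :
    HasSum (fun k : ℕ => x ^ (k + 2) / (k + 2)!) (exp x - 1 - x) := by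
  rw [show exp x - 1 - x = exp x - ∑ i ∈ range 2, x ^ i / (i)! by
    simp [sum_range_succ, sub_sub]]
  exact (hasSum_nat_add_iff' 2).2 (exp_eq_exp_ℝ ▸ NormedSpace.expSeries_div_hasSum_exp x)

theorem exp_sub_one_sub_le_of_nonneg_of_lt_three {x : ℝ} (hx0 : 0 ≤ x) (hx3 : x < 3) :
    exp x - 1 - x ≤ x ^ 2 / (2 * (1 - x / 3)) := by
  have hgeom : HasSum (fun k : ℕ => x ^ 2 / 2 * (x / 3) ^ k) (x ^ 2 / 2 * (1 - x / 3)⁻¹) :=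
    (hasSum_geometric_of_lt_one (by positivity) (by linarith)).mul_left _
  refine (hasSum_le (fun k => ?_) (hasSum_exp_sub_one_sub x) hgeom).trans_eq (by field_simp)
  have hfac : ((2 * 3 ^ k : ℕ) : ℝ) ≤ (k + 2)! := by
    exact_mod_cast add_comm k 2 ▸ Nat.factorial_mul_pow_le_factorial (m := 2) (n := k)
  calc x ^ (k + 2) / (k + 2)! ≤ x ^ (k + 2) / ((2 * 3 ^ k : ℕ) : ℝ) := by gcongr
    _ = x ^ 2 / 2 * (x / 3) ^ k := by push_cast; rw [div_pow, pow_add]; ring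

theorem exp_sub_one_sub_le_of_le_three_mul {x c : ℝ} (hc0 : 0 ≤ c) (hc1 : c < 1)
    (hx : x ≤ 3 * c) : exp x - 1 - x ≤ x ^ 2 / (2 * (1 - c)) := by
  rcases le_or_gt x 0 with hx0 | hx0
  · calc exp x - 1 - x ≤ x ^ 2 / 2 := by linarith [exp_le_one_add_add_sq_div_two_of_nonpos hx0]
      _ ≤ x ^ 2 / (2 * (1 - c)) := by gcongr; linarith
  · calc exp x - 1 - x ≤ x ^ 2 / (2 * (1 - x / 3)) :=
          exp_sub_one_sub_le_of_nonneg_of_lt_three hx0.le (by linarith)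
      _ ≤ x ^ 2 / (2 * (1 - c)) := by gcongr; linarith

end Real

theorem ProbabilityTheory.iIndepFun.measureReal_sum_ge_le {ι Ω : Type*} [Fintype ι]
    [MeasurableSpace Ω] {μ : Measure Ω} {X : ι → Ω → ℝ} (h_indep : iIndepFun X μ)
    (h_meas : ∀ i, Measurable (X i)) {s : ℝ} (hs : 0 ≤ s)
    (h_int : ∀ i, Integrable (fun ω => exp (s * X i ω)) μ) (ε : ℝ) :
    μ.real {ω | ε ≤ ∑ i, X i ω} ≤ exp (-s * ε) * ∏ i, mgf (X i) μ s := by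
  have := h_indep.isProbabilityMeasure
  rw [← h_indep.mgf_sum h_meas]
  simpa only [Finset.sum_apply] using measure_ge_le_exp_mul_mgf ε hs
    (h_indep.integrable_exp_mul_sum h_meas fun i _ => h_int i)

theorem hasSum_poissonMeasure_exp_mul (r : ℝ≥0) (u : ℝ) :
    HasSum (fun n : ℕ => exp (-r) * r ^ n / n ! * exp (u * n)) (exp (r * (exp u - 1))) := by
  have hexp : HasSum (fun n : ℕ => (r * exp u) ^ n / n !) (exp (r * exp u)) := by
    rw [exp_eq_exp_ℝ]
    exact NormedSpace.expSeries_div_hasSum_exp _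
  rw [show exp (r * (exp u - 1)) = exp (-r) * exp (r * exp u) by rw [← exp_add]; ring_nf]
  refine (hexp.mul_left (exp (-r))).congr_fun fun n => ?_
  rw [mul_pow, mul_comm u, exp_nat_mul]
  ring

theorem integrable_exp_mul_poissonMeasure (r : ℝ≥0) (u : ℝ) :
    Integrable (fun n : ℕ => exp (u * n)) (poissonMeasure r) := by
  simpa [integrable_poissonMeasure_iff, abs_of_pos (exp_pos _)] using
    (hasSum_poissonMeasure_exp_mul r u).summable

theorem mgf_natCast_poissonMeasure (r : ℝ≥0) (u : ℝ) :
    mgf (fun n : ℕ => (n : ℝ)) (poissonMeasure r) u = exp (r * (exp u - 1)) := by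
  simpa [mgf, integral_poissonMeasure] using (hasSum_poissonMeasure_exp_mul r u).tsum_eq

section PoissonVariable

variable {Ω : Type*} [MeasurableSpace Ω] {P : Measure Ω} {Y : Ω → ℕ} {r : ℝ≥0}

theorem integrable_exp_mul_of_map_eq_poissonMeasure (hY : Measurable Y)
    (hlaw : P.map Y = poissonMeasure r) (u : ℝ) :
    Integrable (fun ω => exp (u * Y ω)) P := by
  have h := integrable_exp_mul_poissonMeasure r u
  rw [← hlaw] at h
  exact (integrable_map_measure .of_discrete hY.aemeasurable).1 h

theorem mgf_of_map_eq_poissonMeasure (hY : Measurable Y) (hlaw : P.map Y = poissonMeasure r)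
    (u : ℝ) : mgf (fun ω => (Y ω : ℝ)) P u = exp (r * (exp u - 1)) := by
  rw [← mgf_natCast_poissonMeasure, ← hlaw, mgf_map hY.aemeasurable .of_discrete]
  rfl

theorem mgf_const_mul_le_of_map_eq_poissonMeasure (hY : Measurable Y)
    (hlaw : P.map Y = poissonMeasure r) {w s c : ℝ} (hc0 : 0 ≤ c) (hc1 : c < 1)
    (hsw : s * w ≤ 3 * c) :
    mgf (fun ω => w * (Y ω : ℝ)) P s ≤
      exp (s * (w * r) + s ^ 2 * (w ^ 2 * r) / (2 * (1 - c))) := by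
  rw [mgf_const_mul, mgf_of_map_eq_poissonMeasure hY hlaw, mul_comm w s]
  gcongr
  have := Real.exp_sub_one_sub_le_of_le_three_mul hc0 hc1 hsw
  calc (r : ℝ) * (exp (s * w) - 1) = r * (s * w) + r * (exp (s * w) - 1 - s * w) := by ring
    _ ≤ r * (s * w) + r * ((s * w) ^ 2 / (2 * (1 - c))) := by gcongr
    _ = s * (w * r) + s ^ 2 * (w ^ 2 * r) / (2 * (1 - c)) := by ring

end PoissonVariable

theorem measureReal_weighted_poisson_sum_ge_le {ι Ω : Type*} [Fintype ι] [MeasurableSpace Ω]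
    {P : Measure Ω} {α w : ι → ℝ} (hα : ∀ i, 0 ≤ α i) {Y : ι → Ω → ℕ}
    (hmeas : ∀ i, Measurable (Y i)) (hlaw : ∀ i, P.map (Y i) = poissonMeasure (α i).toNNReal)
    (hindep : iIndepFun Y P) {s c : ℝ} (hs : 0 ≤ s) (hc0 : 0 ≤ c) (hc1 : c < 1)
    (hsw : ∀ i, s * w i ≤ 3 * c) (t : ℝ) :
    P.real {ω | ∑ i, w i * α i + t ≤ ∑ i, w i * (Y i ω : ℝ)} ≤
      exp (-s * t + s ^ 2 * (∑ i, w i ^ 2 * α i) / (2 * (1 - c))) := by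
  have hα_coe : ∀ i, ((α i).toNNReal : ℝ) = α i := fun i => Real.coe_toNNReal _ (hα i)
  have hX_meas : ∀ i, Measurable fun ω => w i * (Y i ω : ℝ) := fun i =>
    (measurable_from_top.comp (hmeas i)).const_mul (w i)
  have hX_int : ∀ i, Integrable (fun ω => exp (s * (w i * (Y i ω : ℝ)))) P := fun i => by
    simpa only [mul_assoc] using
      integrable_exp_mul_of_map_eq_poissonMeasure (hmeas i) (hlaw i) (s * w i)
  have hX_indep : iIndepFun (fun i ω => w i * (Y i ω : ℝ)) P :=
    hindep.comp (fun i (y : ℕ) => w i * (y : ℝ)) fun i => measurable_from_top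
  calc P.real {ω | ∑ i, w i * α i + t ≤ ∑ i, w i * (Y i ω : ℝ)}
      ≤ exp (-s * (∑ i, w i * α i + t)) * ∏ i, mgf (fun ω => w i * (Y i ω : ℝ)) P s :=
        hX_indep.measureReal_sum_ge_le hX_meas hs hX_int _
    _ ≤ exp (-s * (∑ i, w i * α i + t)) *
          ∏ i, exp (s * (w i * α i) + s ^ 2 * (w i ^ 2 * α i) / (2 * (1 - c))) := by
        gcongr with i
        · exact fun _ _ => mgf_nonneg
        · simpa only [hα_coe] using
            mgf_const_mul_le_of_map_eq_poissonMeasure (hmeas i) (hlaw i) hc0 hc1 (hsw i)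
    _ = exp (-s * t + s ^ 2 * (∑ i, w i ^ 2 * α i) / (2 * (1 - c))) := by
        rw [← exp_sum, ← exp_add, sum_add_distrib, ← mul_sum, ← sum_div, ← mul_sum]
        ring_nf

theorem stmt5_general
    {Ω : Type*} [MeasurableSpace Ω] (P : Measure Ω) [IsProbabilityMeasure P]
    (n : ℕ)
    (α w : Fin n → ℝ) (hα : ∀ i, 0 < α i) (hw : ∃ i, w i ≠ 0)
    (Y : Fin n → Ω → ℕ) (hmeas : ∀ i, Measurable (Y i))
    (hlaw : ∀ i, P.map (Y i) = poissonMeasure (Real.toNNReal (α i)))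
    (hindep : iIndepFun Y P)
    (σn2 wM : ℝ)
    (hσ : σn2 = ∑ i, w i ^ 2 * α i)
    (hwM : IsGreatest (Set.range fun i => |w i|) wM)
    (t : ℝ) (ht0 : 0 ≤ t) :
    P {ω | ∑ i, w i * α i + t ≤ ∑ i, w i * (Y i ω : ℝ)} ≤
      ENNReal.ofReal (Real.exp (-t ^ 2 / (2 * (σn2 + wM * t / 3)))) := by
  obtain ⟨i₀, hi₀⟩ := hw
  have hσ_pos : 0 < σn2 :=
    hσ ▸ sum_pos' (fun i _ => by have := hα i; positivity)
      ⟨i₀, mem_univ _, mul_pos (by positivity) (hα i₀)⟩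
  have hw_le : ∀ i, w i ≤ wM := fun i => (le_abs_self _).trans (hwM.2 ⟨i, rfl⟩)
  have hwM_nonneg : 0 ≤ wM := (abs_nonneg _).trans (hwM.2 ⟨i₀, rfl⟩)
  set D := σn2 + wM * t / 3 with hD_def
  have hD : 0 < D := by positivity
  -- Chernoff parameter `s = t / D`: then `1 - c = σn2 / D` and the exponent collapses
  have hs : 0 ≤ t / D := by positivity
  have h1c : 1 - t / D * wM / 3 = σn2 / D := by
    field_simp
    linarith
  have hbound := measureReal_weighted_poisson_sum_ge_le (w := w) (fun i => (hα i).le) hmeas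
    hlaw hindep hs (c := t / D * wM / 3) (by positivity) (by linarith [div_pos hσ_pos hD])
    (fun i => by linarith [mul_le_mul_of_nonneg_left (hw_le i) hs]) t
  rw [← hσ, h1c, show -(t / D) * t + (t / D) ^ 2 * σn2 / (2 * (σn2 / D)) = -t ^ 2 / (2 * D) by
    field_simp; ring] at hbound
  exact (ENNReal.le_ofReal_iff_toReal_le (measure_ne_top _ _) (exp_pos _).le).2 hbound

/-- Bernstein-type upper tail bound for weighted sums of independent Poisson
random variables. -/
theorem stmt5
    {Ω : Type*} [MeasurableSpace Ω] (P : Measure Ω) [IsProbabilityMeasure P]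
    (n : ℕ) (hn : 0 < n)
    (α w : Fin n → ℝ) (hα : ∀ i, 0 < α i) (hw : ∃ i, w i ≠ 0)
    (Y : Fin n → Ω → ℕ) (hmeas : ∀ i, Measurable (Y i))
    (hlaw : ∀ i, P.map (Y i) = poissonMeasure (Real.toNNReal (α i)))
    (hindep : iIndepFun Y P)
    (σn2 wM : ℝ)
    (hσ : σn2 = ∑ i, w i ^ 2 * α i)
    (hwM : IsGreatest (Set.range fun i => |w i|) wM)
    (t : ℝ) (ht0 : 0 ≤ t) (ht : t ≤ 3 * σn2 / (2 * wM)) :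
    P {ω | ∑ i, w i * α i + t ≤ ∑ i, w i * (Y i ω : ℝ)} ≤
      ENNReal.ofReal (Real.exp (-t ^ 2 / (2 * (σn2 + wM * t / 3)))) :=
  stmt5_general P n α w hα hw Y hmeas hlaw hindep σn2 wM hσ hwM t ht0
end

section
/- Let Y₁, …, Y_n be independent random variables with Y_i ∼ Poisson(α_i) for α_i > 0, and let w₁, …, w_n ∈ ℝ be not all zero. Set σ_n² = Σ_{i=1}^n w_i² α_i and w_M = max_{1 ≤ i ≤ n} |w_i|. Then for every t with 0 ≤ t ≤ 2σ_n²/(3 w_M), one has P( Σ_{i=1}^n w_i Y_i ≤ Σ_{i=1}^n w_i α_i − t ) ≤ exp( − t² / (2(σ_n² + w_M t / 3)) ). -/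
/-!
The Poisson moment generating function `E exp (θ Y) = exp (α (e^θ - 1))` and the Bernstein estimate
`e^y - 1 - y ≤ y² / (2 (1 - c / 3))` for `|y| ≤ c < 3` (compare the exponential series termwise
with a geometric series, using `(n + 2)! ≥ 2 · 3ⁿ`) give, for `S = ∑ wᵢ Yᵢ` and `s w_M < 3`,
`log E exp (-s S) ≤ -s E S + s² σ² / (2 (1 - s w_M / 3))`. Chernoff's bound at
`s = t / (σ² + w_M t / 3)` turns this into the exponent `-t² / (2 (σ² + w_M t / 3))`.
-/

open MeasureTheory ProbabilityTheory Real
open scoped NNReal ENNReal Nat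

lemma Nat.two_mul_three_pow_le_factorial_add_two (n : ℕ) : 2 * 3 ^ n ≤ (n + 2)! := by
  induction n with
  | zero => simp [Nat.factorial]
  | succ k ih =>
    rw [Nat.factorial_succ, pow_succ]
    nlinarith

lemma Real.exp_sub_one_sub_le_of_abs_le {y c : ℝ} (hy : |y| ≤ c) (hc : c < 3) :
    exp y - 1 - y ≤ y ^ 2 / (2 * (1 - c / 3)) := by
  have hc0 : 0 ≤ c := (abs_nonneg y).trans hy
  have hexp : HasSum (fun n : ℕ ↦ y ^ (n + 2) / (n + 2)!) (exp y - 1 - y) := by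
    have h := (hasSum_nat_add_iff' 2).mpr (NormedSpace.expSeries_div_hasSum_exp y)
    simpa [Finset.sum_range_succ, ← exp_eq_exp_ℝ, sub_sub] using h
  have hgeom : HasSum (fun n : ℕ ↦ y ^ 2 / 2 * (c / 3) ^ n) (y ^ 2 / (2 * (1 - c / 3))) := by
    have h := (hasSum_geometric_of_lt_one (by positivity) (by linarith : c / 3 < 1)).mul_left
      (y ^ 2 / 2)
    rwa [← div_eq_mul_inv, div_div] at h
  refine hasSum_le (fun n ↦ ?_) hexp hgeom
  have hfact : (2 * 3 ^ n : ℝ) ≤ (n + 2)! := by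
    exact_mod_cast Nat.two_mul_three_pow_le_factorial_add_two n
  calc y ^ (n + 2) / (n + 2)! ≤ c ^ n * y ^ 2 / (n + 2)! := by
        gcongr
        calc y ^ (n + 2) ≤ |y| ^ n * y ^ 2 := by
              rw [← sq_abs y, ← pow_add, ← abs_pow]; exact le_abs_self _
          _ ≤ c ^ n * y ^ 2 := by gcongr
    _ ≤ c ^ n * y ^ 2 / (2 * 3 ^ n) := by gcongr
    _ = y ^ 2 / 2 * (c / 3) ^ n := by rw [div_pow]; field_simp

namespace ProbabilityTheory

lemma measureReal_le_sub_le_exp_of_mgf_neg_le {Ω : Type*} [MeasurableSpace Ω] {P : Measure Ω}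
    [IsFiniteMeasure P] {X : Ω → ℝ} {m v b t : ℝ} (hv : 0 < v) (hb : 0 ≤ b) (ht : 0 ≤ t)
    (hmgf : ∀ s, 0 ≤ s → s * b < 3 → Integrable (fun ω ↦ exp (-s * X ω)) P ∧
      mgf X P (-s) ≤ exp (-s * m + s ^ 2 * v / (2 * (1 - s * b / 3)))) :
    P.real {ω | X ω ≤ m - t} ≤ exp (-t ^ 2 / (2 * (v + b * t / 3))) := by
  set D := v + b * t / 3 with hD_def
  have hD : 0 < D := by positivity
  set s := t / D
  have hsD : s * D = t := div_mul_cancel₀ t hD.ne'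
  have hslack : 1 - s * b / 3 = v / D := by
    field_simp
    linear_combination (-b) * hsD + 3 * hD_def
  have hsb : s * b < 3 := by linarith [div_pos hv hD]
  obtain ⟨hint, hle⟩ := hmgf s (by positivity) hsb
  calc P.real {ω | X ω ≤ m - t} ≤ exp (-(-s) * (m - t)) * mgf X P (-s) :=
        measure_le_le_exp_mul_mgf _ (by simpa using (by positivity : 0 ≤ s)) hint
    _ ≤ exp (s * (m - t)) * exp (-s * m + s ^ 2 * v / (2 * (1 - s * b / 3))) := by
        rw [neg_neg]; gcongr
    _ = exp (-t ^ 2 / (2 * D)) := by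
        rw [← exp_add, hslack]
        congr 1
        field_simp
        linear_combination (s * D - t) * hsD

section Poisson

variable (r : ℝ≥0) (θ : ℝ)

lemma hasSum_poissonMeasure_mul_exp :
    HasSum (fun n : ℕ ↦ exp (-r) * r ^ n / n ! * exp (θ * n)) (exp (r * (exp θ - 1))) := by
  have hterm : ∀ n : ℕ, exp (-r) * r ^ n / n ! * exp (θ * n)
      = exp (-r) * ((r * exp θ) ^ n / n !) := fun n ↦ by
    rw [mul_pow, ← exp_nat_mul]; ring_nf
  have h := (NormedSpace.expSeries_div_hasSum_exp ((r : ℝ) * exp θ)).mul_left (exp (-r))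
  rw [← exp_eq_exp_ℝ, ← exp_add] at h
  simp_rw [hterm, show (r : ℝ) * (exp θ - 1) = -r + r * exp θ by ring]
  exact h

lemma integrable_exp_mul_poissonMeasure : Integrable (fun n : ℕ ↦ exp (θ * n)) Po(r) := by
  rw [integrable_poissonMeasure_iff]
  simpa [Real.norm_eq_abs, abs_exp] using (hasSum_poissonMeasure_mul_exp r θ).summable

lemma integral_exp_mul_poissonMeasure : ∫ n, exp (θ * n) ∂Po(r) = exp (r * (exp θ - 1)) :=
  (hasSum_integral_poissonMeasure (integrable_exp_mul_poissonMeasure r θ)).unique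
    (hasSum_poissonMeasure_mul_exp r θ)

variable {Ω : Type*} [MeasurableSpace Ω] {P : Measure Ω} {Y : Ω → ℕ} {r}

lemma HasLaw.mgf_of_poissonMeasure (hY : HasLaw Y Po(r) P) :
    mgf (fun ω ↦ (Y ω : ℝ)) P θ = exp (r * (exp θ - 1)) := by
  rw [mgf, ← integral_exp_mul_poissonMeasure]
  exact hY.integral_comp (f := fun n : ℕ ↦ exp (θ * n)) (by fun_prop)

end Poisson

section WeightedPoissonSum

variable {ι Ω : Type*} [Fintype ι] [MeasurableSpace Ω] {P : Measure Ω} {Y : ι → Ω → ℕ}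
  {α : ι → ℝ≥0}

lemma iIndepFun.mgf_sum_mul_of_poissonMeasure (hindep : iIndepFun Y P)
    (hY : ∀ i, HasLaw (Y i) Po(α i) P) (w : ι → ℝ) (θ : ℝ) :
    mgf (fun ω ↦ ∑ i, w i * (Y i ω : ℝ)) P θ = exp (∑ i, α i * (exp (w i * θ) - 1)) := by
  have hX : iIndepFun (fun i ω ↦ w i * (Y i ω : ℝ)) P :=
    hindep.comp (fun i (n : ℕ) ↦ w i * (n : ℝ)) fun i ↦ by fun_prop
  rw [← Finset.sum_fn, hX.mgf_sum₀ (fun i ↦ by fun_prop), exp_sum]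
  refine Finset.prod_congr rfl fun i _ ↦ ?_
  rw [mgf_const_mul, (hY i).mgf_of_poissonMeasure]

lemma iIndepFun.integrable_exp_mul_sum_mul_of_poissonMeasure (hindep : iIndepFun Y P)
    (hY : ∀ i, HasLaw (Y i) Po(α i) P) (w : ι → ℝ) (θ : ℝ) :
    Integrable (fun ω ↦ exp (θ * ∑ i, w i * (Y i ω : ℝ))) P := by
  have := hindep.isProbabilityMeasure
  rw [← mgf_pos_iff, hindep.mgf_sum_mul_of_poissonMeasure hY]
  exact exp_pos _

lemma iIndepFun.mgf_sum_mul_neg_le_of_poissonMeasure (hindep : iIndepFun Y P)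
    (hY : ∀ i, HasLaw (Y i) Po(α i) P) {w : ι → ℝ} {b s : ℝ} (hb : ∀ i, |w i| ≤ b)
    (hs : 0 ≤ s) (hsb : s * b < 3) :
    mgf (fun ω ↦ ∑ i, w i * (Y i ω : ℝ)) P (-s) ≤
      exp (-s * ∑ i, w i * α i + s ^ 2 * (∑ i, w i ^ 2 * α i) / (2 * (1 - s * b / 3))) := by
  rw [hindep.mgf_sum_mul_of_poissonMeasure hY, exp_le_exp]
  calc ∑ i, α i * (exp (w i * -s) - 1)
      ≤ ∑ i, (-s * (w i * α i) + s ^ 2 * (w i ^ 2 * α i) / (2 * (1 - s * b / 3))) := by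
        refine Finset.sum_le_sum fun i _ ↦ ?_
        have hy : |w i * -s| ≤ s * b := by
          rw [abs_mul, abs_neg, abs_of_nonneg hs, mul_comm]
          exact mul_le_mul_of_nonneg_left (hb i) hs
        calc (α i : ℝ) * (exp (w i * -s) - 1)
            ≤ α i * (w i * -s + (w i * -s) ^ 2 / (2 * (1 - s * b / 3))) := by
              gcongr
              linarith [exp_sub_one_sub_le_of_abs_le hy hsb]
          _ = _ := by ring
    _ = _ := by rw [Finset.sum_add_distrib, Finset.mul_sum, Finset.mul_sum, Finset.sum_div]

end WeightedPoissonSum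

end ProbabilityTheory

theorem stmt6_general
    {Ω : Type*} [MeasurableSpace Ω] (P : Measure Ω) [IsProbabilityMeasure P]
    (n : ℕ)
    (α w : Fin n → ℝ) (hα : ∀ i, 0 < α i) (hw : ∃ i, w i ≠ 0)
    (Y : Fin n → Ω → ℕ) (hmeas : ∀ i, Measurable (Y i))
    (hlaw : ∀ i, P.map (Y i) = poissonMeasure (Real.toNNReal (α i)))
    (hindep : iIndepFun Y P)
    (σn2 wM : ℝ)
    (hσ : σn2 = ∑ i, w i ^ 2 * α i)
    (hwM : IsGreatest (Set.range fun i => |w i|) wM)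
    (t : ℝ) (ht0 : 0 ≤ t) :
    P {ω | ∑ i, w i * (Y i ω : ℝ) ≤ ∑ i, w i * α i - t} ≤
      ENNReal.ofReal (Real.exp (-t ^ 2 / (2 * (σn2 + wM * t / 3)))) := by
  obtain ⟨i₀, hi₀⟩ := hw
  have hY : ∀ i, HasLaw (Y i) Po((α i).toNNReal) P := fun i ↦ ⟨(hmeas i).aemeasurable, hlaw i⟩
  have hcoe : ∀ i, ((α i).toNNReal : ℝ) = α i := fun i ↦ Real.coe_toNNReal _ (hα i).le
  have hb : ∀ i, |w i| ≤ wM := fun i ↦ hwM.2 ⟨i, rfl⟩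
  have hσ0 : 0 < σn2 := hσ ▸ Finset.sum_pos' (fun i _ ↦ by have := hα i; positivity)
    ⟨i₀, Finset.mem_univ _, by have := hα i₀; positivity⟩
  have htail := measureReal_le_sub_le_exp_of_mgf_neg_le (P := P)
    (X := fun ω ↦ ∑ i, w i * (Y i ω : ℝ)) (m := ∑ i, w i * α i) hσ0
    ((abs_nonneg _).trans (hb i₀)) ht0 fun s hs hsb ↦ by
      have hmgf := hindep.mgf_sum_mul_neg_le_of_poissonMeasure hY hb hs hsb
      simp only [hcoe, ← hσ] at hmgf
      exact ⟨hindep.integrable_exp_mul_sum_mul_of_poissonMeasure hY w (-s), hmgf⟩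
  rw [← ENNReal.ofReal_toReal (measure_ne_top P _)]
  exact ENNReal.ofReal_le_ofReal htail

/-- Bernstein-type lower tail bound for weighted sums of independent Poisson
random variables. -/
theorem stmt6
    {Ω : Type*} [MeasurableSpace Ω] (P : Measure Ω) [IsProbabilityMeasure P]
    (n : ℕ) (hn : 0 < n)
    (α w : Fin n → ℝ) (hα : ∀ i, 0 < α i) (hw : ∃ i, w i ≠ 0)
    (Y : Fin n → Ω → ℕ) (hmeas : ∀ i, Measurable (Y i))
    (hlaw : ∀ i, P.map (Y i) = poissonMeasure (Real.toNNReal (α i)))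
    (hindep : iIndepFun Y P)
    (σn2 wM : ℝ)
    (hσ : σn2 = ∑ i, w i ^ 2 * α i)
    (hwM : IsGreatest (Set.range fun i => |w i|) wM)
    (t : ℝ) (ht0 : 0 ≤ t) (ht : t ≤ 2 * σn2 / (3 * wM)) :
    P {ω | ∑ i, w i * (Y i ω : ℝ) ≤ ∑ i, w i * α i - t} ≤
      ENNReal.ofReal (Real.exp (-t ^ 2 / (2 * (σn2 + wM * t / 3)))) :=
  stmt6_general P n α w hα hw Y hmeas hlaw hindep σn2 wM hσ hwM t ht0
end

section
/- Let 0 < x_min ≤ x_max, α > 0, and let x, c ∈ ℝ^n have all coordinates in [x_min, x_max]. Then (x_min² / (2 x_max³)) · α ‖x − c‖₂² ≤ Σ_{i=1}^n ( α(c_i − x_i) + α x_i ln(x_i / c_i) ) ≤ (x_max² / (2 x_min³)) · α ‖x − c‖₂², where the middle expression equals the Kullback–Leibler divergence between the product of Poisson distributions with means α x_i and the product of Poisson distributions with means α c_i. -/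
/-!
Each summand is `α` times `b - a + a log (a / b)` with `a = x i`, `b = c i`. This vanishes at
`b = a` together with its `b`-derivative `1 - a / b`, so Cauchy's mean value theorem against
`(b - a)²` writes it as `(a - b)² / (2 ξ)` for some `ξ` between `a` and `b`. Since `ξ` lies in
`[x_min, x_max]`, each summand is squeezed between `(a - b)² / (2 x_max)` and
`(a - b)² / (2 x_min)`, and these are weaker than the stated constants.
-/

open Real Set

theorem exists_mem_uIoo_ratio_hasDerivAt_eq_ratio_slope {f f' g g' : ℝ → ℝ} {a b : ℝ}
    (hab : a ≠ b) (hf : ∀ x ∈ uIcc a b, HasDerivAt f (f' x) x)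
    (hg : ∀ x ∈ uIcc a b, HasDerivAt g (g' x) x) :
    ∃ c ∈ uIoo a b, (g b - g a) * f' c = (f b - f a) * g' c := by
  wlog hlt : a < b generalizing a b
  · obtain ⟨c, hc, h⟩ := this hab.symm (uIcc_comm a b ▸ hf) (uIcc_comm a b ▸ hg)
      (hab.lt_or_gt.resolve_left hlt)
    exact ⟨c, uIoo_comm a b ▸ hc, by linear_combination -h⟩
  rw [uIcc_of_le hlt.le] at hf hg
  obtain ⟨c, hc, h⟩ := exists_ratio_hasDerivAt_eq_ratio_slope f f' hlt
    (fun x hx => (hf x hx).continuousAt.continuousWithinAt)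
    (fun x hx => hf x (Ioo_subset_Icc_self hx))
    g g' (fun x hx => (hg x hx).continuousAt.continuousWithinAt)
    (fun x hx => hg x (Ioo_subset_Icc_self hx))
  exact ⟨c, mem_uIoo_of_lt hc.1 hc.2, h⟩

theorem exists_mem_uIcc_sub_add_mul_log_div_eq {a b : ℝ} (ha : 0 < a) (hb : 0 < b) :
    ∃ ξ ∈ uIcc a b, b - a + a * log (a / b) = (a - b) ^ 2 / (2 * ξ) := by
  rcases eq_or_ne a b with rfl | hab
  · exact ⟨a, left_mem_uIcc, by simp⟩
  have hpos : ∀ x ∈ uIcc a b, 0 < x := fun x hx => (lt_min ha hb).trans_le hx.1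
  obtain ⟨ξ, hξ, h⟩ := exists_mem_uIoo_ratio_hasDerivAt_eq_ratio_slope
    (f := fun s => s - a + a * (log a - log s)) (f' := fun s => 1 - a / s)
    (g := fun s => (s - a) ^ 2) (g' := fun s => 2 * (s - a)) hab
    (fun x hx => (((hasDerivAt_id' x).sub_const a).add
      (((hasDerivAt_const x (log a)).sub (hasDerivAt_log (hpos x hx).ne')).const_mul a)).congr_deriv
        (by ring))
    (fun x _ => (((hasDerivAt_id x).sub_const a).pow 2).congr_deriv (by simp))
  have hξ0 : 0 < ξ := hpos ξ (uIoo_subset_uIcc_self hξ)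
  have hξa : ξ - a ≠ 0 := sub_ne_zero.2 (ne_of_mem_of_not_mem hξ left_notMem_uIoo)
  refine ⟨ξ, uIoo_subset_uIcc_self hξ, ?_⟩
  rw [log_div ha.ne' hb.ne', eq_div_iff (by positivity)]
  simp only [sub_self] at h
  field_simp at h
  linear_combination -h

theorem sq_div_le_sub_add_mul_log_div {M a b : ℝ} (ha : 0 < a) (hb : 0 < b) (haM : a ≤ M)
    (hbM : b ≤ M) : (a - b) ^ 2 / (2 * M) ≤ b - a + a * log (a / b) := by
  obtain ⟨ξ, hξ, h⟩ := exists_mem_uIcc_sub_add_mul_log_div_eq ha hb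
  rw [h]
  have hξ0 : 0 < ξ := (lt_min ha hb).trans_le hξ.1
  gcongr
  exact hξ.2.trans (max_le haM hbM)

theorem sub_add_mul_log_div_le_sq_div {m a b : ℝ} (hm : 0 < m) (hma : m ≤ a) (hmb : m ≤ b) :
    b - a + a * log (a / b) ≤ (a - b) ^ 2 / (2 * m) := by
  obtain ⟨ξ, hξ, h⟩ := exists_mem_uIcc_sub_add_mul_log_div_eq (hm.trans_le hma) (hm.trans_le hmb)
  rw [h]
  gcongr
  exact (le_min hma hmb).trans hξ.1

theorem mul_sq_le_sub_add_mul_log_div {m M a b : ℝ} (hm : 0 < m) (ha : a ∈ Icc m M)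
    (hb : b ∈ Icc m M) : m ^ 2 / (2 * M ^ 3) * (a - b) ^ 2 ≤ b - a + a * log (a / b) := by
  have hmM : m ≤ M := ha.1.trans ha.2
  have hM : 0 < M := hm.trans_le hmM
  calc m ^ 2 / (2 * M ^ 3) * (a - b) ^ 2 = (m / M) ^ 2 * ((a - b) ^ 2 / (2 * M)) := by
        field_simp
    _ ≤ 1 * ((a - b) ^ 2 / (2 * M)) := by
        gcongr
        exact pow_le_one₀ (by positivity) ((div_le_one hM).2 hmM)
    _ ≤ b - a + a * log (a / b) := by
        rw [one_mul]
        exact sq_div_le_sub_add_mul_log_div (hm.trans_le ha.1) (hm.trans_le hb.1) ha.2 hb.2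

theorem sub_add_mul_log_div_le_mul_sq {m M a b : ℝ} (hm : 0 < m) (ha : a ∈ Icc m M)
    (hb : b ∈ Icc m M) : b - a + a * log (a / b) ≤ M ^ 2 / (2 * m ^ 3) * (a - b) ^ 2 := by
  have hmM : m ≤ M := ha.1.trans ha.2
  calc b - a + a * log (a / b) ≤ 1 * ((a - b) ^ 2 / (2 * m)) := by
        rw [one_mul]
        exact sub_add_mul_log_div_le_sq_div hm ha.1 hb.1
    _ ≤ (M / m) ^ 2 * ((a - b) ^ 2 / (2 * m)) := by
        gcongr
        exact one_le_pow₀ ((one_le_div hm).2 hmM)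
    _ = M ^ 2 / (2 * m ^ 3) * (a - b) ^ 2 := by
        field_simp

theorem stmt10_general (n : ℕ) (xmin xmax α : ℝ) (h0 : 0 < xmin) (hα : 0 < α)
    (x c : EuclideanSpace ℝ (Fin n))
    (hx : ∀ i, x i ∈ Set.Icc xmin xmax) (hc : ∀ i, c i ∈ Set.Icc xmin xmax) :
    xmin ^ 2 / (2 * xmax ^ 3) * (α * ‖x - c‖ ^ 2) ≤
        ∑ i, (α * (c i - x i) + α * x i * Real.log (x i / c i)) ∧
      ∑ i, (α * (c i - x i) + α * x i * Real.log (x i / c i)) ≤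
        xmax ^ 2 / (2 * xmin ^ 3) * (α * ‖x - c‖ ^ 2) := by
  have hsum : ∑ i, (α * (c i - x i) + α * x i * log (x i / c i)) =
      α * ∑ i, (c i - x i + x i * log (x i / c i)) := by
    rw [Finset.mul_sum]
    exact Finset.sum_congr rfl fun i _ => by ring
  rw [hsum, EuclideanSpace.real_norm_sq_eq, mul_left_comm, mul_left_comm (xmax ^ 2 / _)]
  constructor <;> gcongr <;> rw [Finset.mul_sum] <;> gcongr with i
  · simpa using mul_sq_le_sub_add_mul_log_div h0 (hx i) (hc i)
  · simpa using sub_add_mul_log_div_le_mul_sq h0 (hx i) (hc i)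

/-- Two-sided bounds relating the KL divergence between products of Poisson
distributions with means `α * x i` and `α * c i` to the squared Euclidean distance. -/
theorem stmt10 (n : ℕ) (xmin xmax α : ℝ) (h0 : 0 < xmin) (hmm : xmin ≤ xmax) (hα : 0 < α)
    (x c : EuclideanSpace ℝ (Fin n))
    (hx : ∀ i, x i ∈ Set.Icc xmin xmax) (hc : ∀ i, c i ∈ Set.Icc xmin xmax) :
    xmin ^ 2 / (2 * xmax ^ 3) * (α * ‖x - c‖ ^ 2) ≤
        ∑ i, (α * (c i - x i) + α * x i * Real.log (x i / c i)) ∧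
      ∑ i, (α * (c i - x i) + α * x i * Real.log (x i / c i)) ≤
        xmax ^ 2 / (2 * xmin ^ 3) * (α * ‖x - c‖ ^ 2) :=
  stmt10_general n xmin xmax α h0 hα x c hx hc
end

section
/- Let 1 ≤ k < n be integers and let 0 < δ ≤ k/n. Then there exists a finite set C ⊂ ℝ^n with log₂ |C| ≤ (k/2) log₂(k/(nδ)) + k log₂(n/k) + log₂ k + k(log₂ e + 1) such that for every x ∈ ℝ^n with at most k nonzero coordinates and ‖x‖_∞ ≤ 1, there exists c ∈ C with ‖x − c‖₂² ≤ nδ. -/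
/-!
Enlarge the support of `x` to a set `S` of exactly `k` coordinates and round each coordinate in
`S` to the nearest midpoint of `m` equal cells of `[-1, 1]`, an error of at most `1 / m`. The
squared distortion is then at most `k / m ^ 2`, which is at most `n δ` for
`m = ⌈√(k / (n δ))⌉ ≤ 2 √(k / (n δ))`. The codebook has at most `choose n k * m ^ k` points,
and `choose n k ≤ (e n / k) ^ k` because `k ^ k / k! ≤ e ^ k`; taking `log₂` gives the rate,
with room to spare for the `log₂ k` term.
-/

open Finset Real

theorem Nat.cast_choose_le_exp_mul_div_pow (n k : ℕ) :
    (n.choose k : ℝ) ≤ (exp 1 * n / k) ^ k := by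
  have hkk : (0 : ℝ) < (k : ℝ) ^ k := by exact_mod_cast Nat.pow_self_pos
  calc (n.choose k : ℝ) ≤ (n : ℝ) ^ k / k.factorial := Nat.choose_le_pow_div k n
    _ = (n : ℝ) ^ k * ((k : ℝ) ^ k / k.factorial) / (k : ℝ) ^ k := by field_simp
    _ ≤ (n : ℝ) ^ k * exp k / (k : ℝ) ^ k := by
        gcongr; exact Real.pow_div_factorial_le_exp _ (Nat.cast_nonneg k) k
    _ = (exp 1 * n / k) ^ k := by rw [← exp_one_pow]; ring

/-- The midpoint of the `j`-th of `m` equal cells of `[-1, 1]`. -/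
noncomputable def uniformGridPoint (m j : ℕ) : ℝ := -1 + (2 * j + 1) / m

theorem exists_abs_sub_uniformGridPoint_le {m : ℕ} (hm : 0 < m) {t : ℝ} (ht : |t| ≤ 1) :
    ∃ j : Fin m, |t - uniformGridPoint m j| ≤ 1 / m := by
  have hm' : (0 : ℝ) < m := by exact_mod_cast hm
  obtain ⟨ht₁, ht₂⟩ := abs_le.mp ht
  set u : ℝ := (t + 1) * m / 2
  have hu₀ : 0 ≤ u := div_nonneg (mul_nonneg (by linarith) hm'.le) zero_le_two
  have hum : u ≤ m := by simp only [u]; nlinarith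
  refine ⟨⟨min ⌊u⌋₊ (m - 1), by omega⟩, ?_⟩
  set j : ℕ := min ⌊u⌋₊ (m - 1)
  have hju : (j : ℝ) ≤ u := (Nat.cast_le.mpr (min_le_left _ _)).trans (Nat.floor_le hu₀)
  have huj : u ≤ j + 1 := by
    rcases le_total ⌊u⌋₊ (m - 1) with h | h
    · rw [show j = ⌊u⌋₊ from min_eq_left h]; exact (Nat.lt_floor_add_one u).le
    · rw [show j = m - 1 from min_eq_right h, Nat.cast_sub hm, Nat.cast_one]; linarith
  have hdiff : t - uniformGridPoint m j = (2 * u - 2 * j - 1) / m := by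
    simp only [uniformGridPoint, u]; field_simp; ring
  rw [hdiff, abs_div, abs_of_pos hm']
  gcongr
  exact abs_le.mpr ⟨by linarith, by linarith⟩

section SparseGridCodebook

variable (ι : Type*) [Fintype ι] [DecidableEq ι]

/-- Vectors supported on a `k`-set `S`, with each coordinate in `S` at a point of the uniform
`m`-point grid of `[-1, 1]`. -/
noncomputable def sparseGridCodebook (k m : ℕ) : Finset (EuclideanSpace ℝ ι) :=
  (powersetCard k univ).biUnion fun S =>
    (S.pi fun _ => (univ : Finset (Fin m))).image fun g =>
      WithLp.toLp 2 fun i => if h : i ∈ S then uniformGridPoint m (g i h) else 0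

theorem card_sparseGridCodebook_le (k m : ℕ) :
    #(sparseGridCodebook ι k m) ≤ (Fintype.card ι).choose k * m ^ k := by
  calc #(sparseGridCodebook ι k m)
      ≤ ∑ S ∈ powersetCard k (univ : Finset ι), #(S.pi fun _ => (univ : Finset (Fin m))) :=
        card_biUnion_le.trans (sum_le_sum fun _ _ => card_image_le)
    _ = (Fintype.card ι).choose k * m ^ k := by
        rw [sum_congr rfl fun S hS => by
          rw [card_pi, prod_const, card_univ, Fintype.card_fin, (mem_powersetCard.mp hS).2]]
        rw [sum_const, card_powersetCard, card_univ, smul_eq_mul]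

variable {ι}

theorem exists_mem_sparseGridCodebook_norm_sub_sq_le {k m : ℕ} (hm : 0 < m)
    (hk : k ≤ Fintype.card ι) (x : EuclideanSpace ℝ ι) (hx : {i | x i ≠ 0}.ncard ≤ k)
    (hx₁ : ∀ i, |x i| ≤ 1) :
    ∃ c ∈ sparseGridCodebook ι k m, ‖x - c‖ ^ 2 ≤ k / m ^ 2 := by
  obtain ⟨S, hsupp, -, hS⟩ := Set.exists_subsuperset_card_eq (Set.subset_univ _) hx
    (by rwa [Set.ncard_univ, Nat.card_eq_fintype_card])
  lift S to Finset ι using S.toFinite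
  rw [Set.ncard_coe_finset] at hS
  choose g hg using fun i => exists_abs_sub_uniformGridPoint_le hm (hx₁ i)
  set c : EuclideanSpace ℝ ι :=
    WithLp.toLp 2 fun i => if i ∈ S then uniformGridPoint m (g i) else 0
  have hc : c ∈ sparseGridCodebook ι k m :=
    mem_biUnion.mpr ⟨S, mem_powersetCard.mpr ⟨subset_univ S, hS⟩,
      mem_image.mpr ⟨fun i _ => g i, mem_pi.mpr fun _ _ => mem_univ _, by simp [c]⟩⟩
  have hcoord (i : ι) : (x i - c i) ^ 2 ≤ if i ∈ S then (1 / m : ℝ) ^ 2 else 0 := by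
    by_cases hi : i ∈ S
    · simp only [hi, if_true, c]
      exact sq_le_sq' (abs_le.mp (hg i)).1 (abs_le.mp (hg i)).2
    · have hxi : x i = 0 := not_not.mp fun h => hi (hsupp h)
      simp [hi, hxi, c]
  refine ⟨c, hc, ?_⟩
  calc ‖x - c‖ ^ 2 = ∑ i, (x i - c i) ^ 2 := by simp [EuclideanSpace.real_norm_sq_eq]
    _ ≤ ∑ i, if i ∈ S then (1 / m : ℝ) ^ 2 else 0 := sum_le_sum fun i _ => hcoord i
    _ = k / m ^ 2 := by rw [sum_ite_mem, univ_inter, sum_const, hS, nsmul_eq_mul]; ring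

theorem logb_card_sparseGridCodebook_le {k m : ℕ} (hk₀ : 0 < k) (hk : k ≤ Fintype.card ι)
    (hm : 0 < m) {r : ℝ} (hr : 0 < r) (hmr : m ≤ 2 * r) :
    logb 2 #(sparseGridCodebook ι k m) ≤
      k * (1 + logb 2 (exp 1) + logb 2 (Fintype.card ι / k) + logb 2 r) := by
  have hn : (0 : ℝ) < Fintype.card ι := by exact_mod_cast hk₀.trans_le hk
  have hcard : (#(sparseGridCodebook ι k m) : ℝ) ≤
      (2 * exp 1 * (Fintype.card ι / k) * r) ^ k :=
    calc (#(sparseGridCodebook ι k m) : ℝ) ≤ ((Fintype.card ι).choose k : ℝ) * m ^ k := by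
          exact_mod_cast card_sparseGridCodebook_le ι k m
      _ ≤ (exp 1 * Fintype.card ι / k) ^ k * (2 * r) ^ k := by
          gcongr; exact Nat.cast_choose_le_exp_mul_div_pow _ k
      _ = (2 * exp 1 * (Fintype.card ι / k) * r) ^ k := by rw [← mul_pow]; ring
  obtain ⟨c, hc, -⟩ := exists_mem_sparseGridCodebook_norm_sub_sq_le hm hk 0 (by simp) (by simp)
  calc logb 2 #(sparseGridCodebook ι k m)
      ≤ logb 2 ((2 * exp 1 * (Fintype.card ι / k) * r) ^ k) :=
        logb_le_logb_of_le one_lt_two (by exact_mod_cast card_pos.mpr ⟨c, hc⟩) hcard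
    _ = _ := by
        rw [logb_pow, logb_mul (by positivity) hr.ne', logb_mul (by positivity) (by positivity),
          logb_mul (by positivity) (by positivity), logb_self_eq_one one_lt_two]

end SparseGridCodebook

/-- Existence of a lossy compression codebook for `k`-sparse vectors with entries
bounded by `1`, achieving per-symbol distortion `δ` with the stated rate bound. -/
theorem stmt11 (n k : ℕ) (hk : 1 ≤ k) (hkn : k < n) (δ : ℝ) (hδ : 0 < δ)
    (hδk : δ ≤ (k : ℝ) / n) :
    ∃ C : Finset (EuclideanSpace ℝ (Fin n)),
      Real.logb 2 C.card ≤ (k / 2 : ℝ) * Real.logb 2 (k / (n * δ)) +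
          k * Real.logb 2 ((n : ℝ) / k) + Real.logb 2 k +
          k * (Real.logb 2 (Real.exp 1) + 1) ∧
      ∀ x : EuclideanSpace ℝ (Fin n),
        {i | x i ≠ 0}.ncard ≤ k → (∀ i, |x i| ≤ 1) →
        ∃ c ∈ C, ‖x - c‖ ^ 2 ≤ n * δ := by
  have hn : (0 : ℝ) < n := by exact_mod_cast (zero_lt_one.trans_le hk).trans hkn
  have hnδ : 0 < n * δ := mul_pos hn hδ
  have hratio : 1 ≤ k / (n * δ) :=
    (one_le_div hnδ).mpr (by rwa [le_div_iff₀ hn, mul_comm] at hδk)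
  set r := √(k / (n * δ)) with hr
  have hr₁ : 1 ≤ r := one_le_sqrt.mpr hratio
  set m := ⌈r⌉₊
  have hm : 0 < m := Nat.ceil_pos.mpr (by linarith)
  have hkn' : k ≤ Fintype.card (Fin n) := by simpa using hkn.le
  refine ⟨sparseGridCodebook (Fin n) k m, ?_, fun x hx hx₁ => ?_⟩
  · have hrate := logb_card_sparseGridCodebook_le hk hkn' hm (by positivity)
      (Nat.ceil_lt_two_mul (by linarith)).le
    have hlogr : logb 2 r = logb 2 (k / (n * δ)) / 2 := by
      simp only [logb, hr, log_sqrt (zero_le_one.trans hratio)]; ring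
    rw [hlogr, Fintype.card_fin] at hrate
    linarith [logb_nonneg one_lt_two (Nat.one_le_cast.mpr hk : (1 : ℝ) ≤ k)]
  · obtain ⟨c, hc, hxc⟩ := exists_mem_sparseGridCodebook_norm_sub_sq_le hm hkn' x hx hx₁
    refine ⟨c, hc, hxc.trans ?_⟩
    have hrm : k / (n * δ) ≤ (m : ℝ) ^ 2 := by
      rw [← sq_sqrt (zero_le_one.trans hratio)]; gcongr; exact Nat.le_ceil r
    rw [div_le_iff₀ hnδ] at hrm
    rw [div_le_iff₀ (by positivity)]; linarith
end
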